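/- Let f ∈ Γ₀(ℝ^n) be sparsity promoting, α > 0, and f_α = f − env_{αf}. Then for every x in the relative interior of α∂f(0), prox_{αf_α}(x) = {0}: 0 is the only minimizer of u ↦ f_α(u) + (1/(2α))‖u−x‖². -/

import Mathlib

open Set
open scoped RealInnerProductSpace Pointwise

noncomputable section

abbrev E (n : ℕ) := EuclideanSpace ℝ (Fin n)

/-- Convex subdifferential. -/
def subdiff {n : ℕ} (f : E n → ℝ) (x : E n) : Set (E n) :=
  {d | ∀ y, f x + ⟪d, y - x⟫ ≤ f y}

/-- Fréchet subdifferential. -/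
def fsubdiff {n : ℕ} (f : E n → ℝ) (x : E n) : Set (E n) :=
  {d | ∀ ε > (0:ℝ), ∃ δ > (0:ℝ), ∀ u, ‖u - x‖ < δ →
    f x + ⟪d, u - x⟫ - ε * ‖u - x‖ ≤ f u}

/-- Sparsity promoting: value 0 at the origin is the global minimum and the
subdifferential at 0 contains a nonzero element. -/
def SparsityPromoting {n : ℕ} (f : E n → ℝ) : Prop :=
  f 0 = 0 ∧ (∀ x, f 0 ≤ f x) ∧ ∃ d ∈ subdiff f 0, d ≠ 0

/-- Moreau envelope with parameter `α`. -/
def env {n : ℕ} (α : ℝ) (f : E n → ℝ) (x : E n) : ℝ :=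
  sInf (Set.range fun u => f u + ‖u - x‖ ^ 2 / (2 * α))

/-- Proximity operator (as a set of minimizers). -/
def proxSet {n : ℕ} (α : ℝ) (f : E n → ℝ) (x : E n) : Set (E n) :=
  {p | ∀ u, f p + ‖p - x‖ ^ 2 / (2 * α) ≤ f u + ‖u - x‖ ^ 2 / (2 * α)}

/-! Write `x = α • w` with `w ∈ ∂f(0)` and `Φ u = f u - env α f u + ‖u - x‖² / (2α)`.
Expanding the square,
`Φ u = ‖x‖² / (2α) + (f u - ⟪w, u⟫) + (‖u‖² / (2α) - env α f u)`,
and both brackets are nonnegative (`w ∈ ∂f(0)`, and `env α f u ≤ f 0 + ‖u‖² / (2α)`), while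
`Φ 0 = ‖x‖² / (2α)`. So `0` is a minimizer, and at any minimizer `p` both brackets vanish.
Since `x` lies in the relative interior of `α ∂f(0)` and `0 ∈ α ∂f(0)`, some `(1 + t) • w`
with `t > 0` is still a subgradient at `0`; together with `f p = ⟪w, p⟫` this forces
`⟪w, p⟫ ≤ 0`, and then `‖p‖² / (2α) = env α f p ≤ f p = ⟪w, p⟫ ≤ 0`. -/

lemma exists_pos_add_smul_sub_mem_of_mem_intrinsicInterior {V : Type*}
    [NormedAddCommGroup V] [NormedSpace ℝ V] {s : Set V} {x y : V}
    (hx : x ∈ intrinsicInterior ℝ s) (hy : y ∈ s) :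
    ∃ t : ℝ, 0 < t ∧ x + t • (x - y) ∈ s := by
  obtain ⟨z, hz, rfl⟩ := hx
  have hdir : (z : V) - y ∈ (affineSpan ℝ s).direction :=
    AffineSubspace.vsub_mem_direction z.2 (subset_affineSpan ℝ s hy)
  let c : ℝ → affineSpan ℝ s := fun t =>
    ⟨z + t • (z - y), by
      simpa [vadd_eq_add, add_comm] using
        AffineSubspace.vadd_mem_of_mem_direction (Submodule.smul_mem _ t hdir) z.2⟩
  have hc : Continuous c := by
    apply Continuous.subtype_mk
    fun_prop
  have hc0 : c 0 = z := Subtype.ext (by simp [c])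
  have hev : ∀ᶠ t in nhds (0 : ℝ), c t ∈ (↑) ⁻¹' s :=
    hc.continuousAt.eventually_mem (hc0 ▸ mem_interior_iff_mem_nhds.mp hz)
  obtain ⟨t, hts, ht⟩ := ((hev.filter_mono nhdsWithin_le_nhds).and
    (self_mem_nhdsWithin : Ioi (0 : ℝ) ∈ nhdsWithin 0 (Ioi 0))).exists
  exact ⟨t, ht, hts⟩

lemma norm_sub_smul_sq_div {V : Type*} [NormedAddCommGroup V] [InnerProductSpace ℝ V]
    {α : ℝ} (hα : α ≠ 0) (u w : V) :
    ‖u - α • w‖ ^ 2 / (2 * α) = ‖u‖ ^ 2 / (2 * α) - ⟪w, u⟫ + ‖α • w‖ ^ 2 / (2 * α) := by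
  rw [norm_sub_sq_real, real_inner_smul_right, real_inner_comm]
  field_simp

section Envelope

variable {n : ℕ} {f : E n → ℝ} {α : ℝ}

lemma env_le (hf : 0 ≤ f) (hα : 0 ≤ α) (x u : E n) :
    env α f x ≤ f u + ‖u - x‖ ^ 2 / (2 * α) :=
  csInf_le ⟨0, by rintro _ ⟨v, rfl⟩; exact add_nonneg (hf v) (by positivity)⟩ ⟨u, rfl⟩

lemma env_le_self (hf : 0 ≤ f) (hα : 0 ≤ α) (x : E n) : env α f x ≤ f x := by
  simpa using env_le hf hα x x

lemma env_le_norm_sq (hf : 0 ≤ f) (hα : 0 ≤ α) (hf0 : f 0 = 0) (x : E n) :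
    env α f x ≤ ‖x‖ ^ 2 / (2 * α) := by
  simpa [hf0] using env_le hf hα x 0

lemma env_nonneg (hf : 0 ≤ f) (hα : 0 ≤ α) (x : E n) : 0 ≤ env α f x :=
  le_csInf (range_nonempty _) (by rintro _ ⟨v, rfl⟩; exact add_nonneg (hf v) (by positivity))

lemma env_zero (hf : 0 ≤ f) (hα : 0 ≤ α) (hf0 : f 0 = 0) : env α f 0 = 0 :=
  le_antisymm (by simpa using env_le_norm_sq hf hα hf0 0) (env_nonneg hf hα 0)

end Envelope

section Subgradient

variable {n : ℕ} {f : E n → ℝ}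

lemma mem_subdiff_zero_iff (hf0 : f 0 = 0) {w : E n} : w ∈ subdiff f 0 ↔ ∀ u, ⟪w, u⟫ ≤ f u := by
  simp [subdiff, hf0]

lemma zero_mem_subdiff_zero (hf : 0 ≤ f) (hf0 : f 0 = 0) : (0 : E n) ∈ subdiff f 0 :=
  (mem_subdiff_zero_iff hf0).mpr fun u => by simpa using hf u

lemma inner_nonpos_of_smul_mem_subdiff_zero (hf0 : f 0 = 0) {w p : E n} {c : ℝ} (hc : 1 < c)
    (hcw : c • w ∈ subdiff f 0) (hp : f p = ⟪w, p⟫) : ⟪w, p⟫ ≤ 0 := by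
  have h := (mem_subdiff_zero_iff hf0).mp hcw p
  rw [real_inner_smul_left, hp] at h
  nlinarith

end Subgradient

section Prox

variable {n : ℕ} {f : E n → ℝ} {α : ℝ} {w : E n}

lemma sub_env_add_norm_sub_smul_sq_eq (hα : α ≠ 0) (u : E n) :
    f u - env α f u + ‖u - α • w‖ ^ 2 / (2 * α) =
      ‖α • w‖ ^ 2 / (2 * α) + (f u - ⟪w, u⟫) + (‖u‖ ^ 2 / (2 * α) - env α f u) := by
  rw [norm_sub_smul_sq_div hα]
  ring

lemma sub_env_add_norm_sub_sq_zero (hf : 0 ≤ f) (hf0 : f 0 = 0) (hα : 0 ≤ α) (x : E n) :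
    f 0 - env α f 0 + ‖0 - x‖ ^ 2 / (2 * α) = ‖x‖ ^ 2 / (2 * α) := by
  simp [env_zero hf hα hf0, hf0]

lemma zero_mem_proxSet_sub_env (hf : 0 ≤ f) (hf0 : f 0 = 0) (hα : 0 < α)
    (hw : w ∈ subdiff f 0) : (0 : E n) ∈ proxSet α (fun u => f u - env α f u) (α • w) := by
  intro u
  rw [sub_env_add_norm_sub_sq_zero hf hf0 hα.le, sub_env_add_norm_sub_smul_sq_eq hα.ne']
  linarith [(mem_subdiff_zero_iff hf0).mp hw u, env_le_norm_sq hf hα.le hf0 u]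

lemma eq_zero_of_mem_proxSet_sub_env (hf : 0 ≤ f) (hf0 : f 0 = 0) (hα : 0 < α)
    (hw : w ∈ subdiff f 0) {c : ℝ} (hc : 1 < c) (hcw : c • w ∈ subdiff f 0) {p : E n}
    (hp : p ∈ proxSet α (fun u => f u - env α f u) (α • w)) : p = 0 := by
  have hp0 := hp 0
  rw [sub_env_add_norm_sub_sq_zero hf hf0 hα.le, sub_env_add_norm_sub_smul_sq_eq hα.ne'] at hp0
  have hwp := (mem_subdiff_zero_iff hf0).mp hw p
  have henv := env_le_norm_sq hf hα.le hf0 p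
  have hfp : f p = ⟪w, p⟫ := by linarith
  have hwp_nonpos := inner_nonpos_of_smul_mem_subdiff_zero hf0 hc hcw hfp
  have hnorm : ‖p‖ ^ 2 / (2 * α) = 0 :=
    le_antisymm (by linarith [env_le_self hf hα.le p]) (by positivity)
  simpa [hα.ne'] using hnorm

end Prox

theorem stmt11_general {n : ℕ} (f : E n → ℝ) (hsp : SparsityPromoting f)
    (α : ℝ) (hα : 0 < α) (x : E n)
    (hx : x ∈ intrinsicInterior ℝ (α • subdiff f 0)) :
    proxSet α (fun u => f u - env α f u) x = {0} := by
  obtain ⟨hf0, hmin, -⟩ := hsp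
  have hf : 0 ≤ f := fun u => by simpa [hf0] using hmin u
  obtain ⟨t, ht, hxt⟩ := exists_pos_add_smul_sub_mem_of_mem_intrinsicInterior hx
    (zero_mem_smul_set (zero_mem_subdiff_zero hf hf0))
  obtain ⟨w, hw, rfl⟩ := intrinsicInterior_subset hx
  have hcw : (1 + t) • w ∈ subdiff f 0 := by
    rwa [show α • w + t • (α • w - 0) = α • ((1 + t) • w) by module,
      smul_mem_smul_set_iff₀ hα.ne'] at hxt
  ext p
  exact ⟨fun hp => eq_zero_of_mem_proxSet_sub_env hf hf0 hα hw (by linarith) hcw hp,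
    fun hp => hp ▸ zero_mem_proxSet_sub_env hf hf0 hα hw⟩

theorem stmt11 {n : ℕ} (f : E n → ℝ) (hconv : ConvexOn ℝ Set.univ f)
    (hlsc : LowerSemicontinuous f) (hsp : SparsityPromoting f)
    (α : ℝ) (hα : 0 < α) (x : E n)
    (hx : x ∈ intrinsicInterior ℝ (α • subdiff f 0)) :
    proxSet α (fun u => f u - env α f u) x = {0} :=
  stmt11_general f hsp α hα x hx
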